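/- arXiv:2208.13162 — 3 statements merged into one kernel-verified Lean document; each statement's English description precedes it below -/
import Mathlib

section
/- Let g, g_1, …, g_n : R^d → R^d with g(x) = (1/n)∑_i g_i(x). If each g_i is L-Lipschitz and ‖g(x) − g_i(x)‖ ≤ ς for all x and i, then for any points x_1, …, x_n ∈ R^d with mean x̄ = (1/n)∑_i x_i, ∑_{i=1}^n ‖g_i(x_i) − (1/n)∑_{j=1}^n g_j(x_j)‖² ≤ 2nς² + (2L²/n) ∑_{i=1}^n ∑_{j=1}^n ‖x_i − x_j‖². -/
open Finset

theorem gradient_variation_sq_bound {d n : ℕ} (hn : 0 < n)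
    (g : Fin n → EuclideanSpace ℝ (Fin d) → EuclideanSpace ℝ (Fin d))
    (L ς : ℝ)
    (hLip : ∀ i x y, ‖g i x - g i y‖ ≤ L * ‖x - y‖)
    (hhet : ∀ i x, ‖(n : ℝ)⁻¹ • (∑ j, g j x) - g i x‖ ≤ ς)
    (x : Fin n → EuclideanSpace ℝ (Fin d)) :
    ∑ i, ‖g i (x i) - (n : ℝ)⁻¹ • (∑ j, g j (x j))‖ ^ 2
      ≤ 2 * n * ς ^ 2 + (2 * L ^ 2 / n) * ∑ i, ∑ j, ‖x i - x j‖ ^ 2 := by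
  have hn' : (0:ℝ) < n := by exact_mod_cast hn
  have key : ∀ i, ‖g i (x i) - (n : ℝ)⁻¹ • (∑ j, g j (x j))‖ ^ 2
      ≤ 2 * ς ^ 2 + (2 * L ^ 2 / n) * ∑ j, ‖x i - x j‖ ^ 2 := by
    intro i
    set u := g i (x i) - (n : ℝ)⁻¹ • (∑ j, g j (x i)) with hu_def
    set v := (n : ℝ)⁻¹ • (∑ j, (g j (x i) - g j (x j))) with hv_def
    have hdecomp : g i (x i) - (n : ℝ)⁻¹ • (∑ j, g j (x j)) = u + v := by
      rw [hu_def, hv_def, Finset.sum_sub_distrib, smul_sub]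
      abel
    have hu : ‖u‖ ≤ ς := by
      rw [hu_def, norm_sub_rev]; exact hhet i (x i)
    have hv : ‖v‖ ≤ (n : ℝ)⁻¹ * ∑ j, L * ‖x i - x j‖ := by
      rw [hv_def, norm_smul, Real.norm_eq_abs, abs_of_nonneg (by positivity)]
      gcongr
      calc ‖∑ j, (g j (x i) - g j (x j))‖ ≤ ∑ j, ‖g j (x i) - g j (x j)‖ :=
            norm_sum_le _ _
        _ ≤ ∑ j, L * ‖x i - x j‖ := Finset.sum_le_sum fun j _ => hLip j _ _
    have hv2 : ‖v‖ ^ 2 ≤ (n : ℝ)⁻¹ * ∑ j, L ^ 2 * ‖x i - x j‖ ^ 2 := by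
      have h1 : (∑ j, L * ‖x i - x j‖) ^ 2
          ≤ (n : ℝ) * ∑ j, (L * ‖x i - x j‖) ^ 2 := by
        have := sq_sum_le_card_mul_sum_sq (s := (Finset.univ : Finset (Fin n)))
          (f := fun j => L * ‖x i - x j‖)
        simpa using this
      have h2 : ‖v‖ ^ 2 ≤ ((n : ℝ)⁻¹ * ∑ j, L * ‖x i - x j‖) ^ 2 := by
        have hvnn : (0:ℝ) ≤ ‖v‖ := norm_nonneg _
        nlinarith [hv]
      calc ‖v‖ ^ 2 ≤ ((n : ℝ)⁻¹ * ∑ j, L * ‖x i - x j‖) ^ 2 := h2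
        _ = (n:ℝ)⁻¹ ^ 2 * (∑ j, L * ‖x i - x j‖) ^ 2 := by ring
        _ ≤ (n:ℝ)⁻¹ ^ 2 * ((n : ℝ) * ∑ j, (L * ‖x i - x j‖) ^ 2) := by
            gcongr
        _ = (n : ℝ)⁻¹ * ∑ j, L ^ 2 * ‖x i - x j‖ ^ 2 := by
            simp_rw [mul_pow]; field_simp
    have hfin : ‖u + v‖ ^ 2 ≤ 2 * ‖u‖ ^ 2 + 2 * ‖v‖ ^ 2 := by
      have h1 := norm_add_le u v
      have h2 : ‖u + v‖ ^ 2 ≤ (‖u‖ + ‖v‖) ^ 2 :=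
        pow_le_pow_left₀ (norm_nonneg _) h1 2
      nlinarith [sq_nonneg (‖u‖ - ‖v‖)]
    rw [hdecomp]
    have hsum : (n : ℝ)⁻¹ * ∑ j, L ^ 2 * ‖x i - x j‖ ^ 2
        = (L ^ 2 / n) * ∑ j, ‖x i - x j‖ ^ 2 := by
      rw [Finset.mul_sum, Finset.mul_sum]
      refine Finset.sum_congr rfl fun j _ => by rw [div_eq_mul_inv]; ring
    have hu2 : ‖u‖ ^ 2 ≤ ς ^ 2 := pow_le_pow_left₀ (norm_nonneg _) hu 2
    calc ‖u + v‖ ^ 2 ≤ 2 * ‖u‖ ^ 2 + 2 * ‖v‖ ^ 2 := hfin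
      _ ≤ 2 * ς ^ 2 + 2 * ((n : ℝ)⁻¹ * ∑ j, L ^ 2 * ‖x i - x j‖ ^ 2) := by
          linarith
      _ = 2 * ς ^ 2 + (2 * L ^ 2 / n) * ∑ j, ‖x i - x j‖ ^ 2 := by
          rw [hsum]; ring
  calc ∑ i, ‖g i (x i) - (n : ℝ)⁻¹ • (∑ j, g j (x j))‖ ^ 2
      ≤ ∑ i, (2 * ς ^ 2 + (2 * L ^ 2 / n) * ∑ j, ‖x i - x j‖ ^ 2) :=
        Finset.sum_le_sum fun i _ => key i
    _ = 2 * n * ς ^ 2 + (2 * L ^ 2 / n) * ∑ i, ∑ j, ‖x i - x j‖ ^ 2 := by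
        rw [Finset.sum_add_distrib, Finset.sum_const, ← Finset.mul_sum]
        simp [mul_comm]; ring
end

section
/- With the same setup as the second-order consensus recursion (Π = I − (1/n)𝟙𝟙ᵀ, W symmetric doubly stochastic with ‖UᵀWU‖₂ ≤ 1−ρ, P⁺ = WP − γG), the fourth-power bound holds: ‖ΠP⁺‖_F⁴ ≤ (1 − ρ)‖ΠP‖_F⁴ + (γ⁴/ρ³)‖ΠG‖_F⁴. -/
/-!
Write `Π = I - 𝟙𝟙ᵀ/n = UUᵀ`. Since `Π` is a symmetric projection, `‖Πx‖ = ‖Uᵀx‖`, and since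
`W𝟙 = 𝟙` and `Uᵀ𝟙 = 0` we have `UᵀW = (UᵀWU)Uᵀ`; hence `‖ΠWx‖ ≤ (1 - ρ)‖Πx‖` column by column,
and the triangle inequality gives `‖ΠP⁺‖ ≤ (1 - ρ)‖ΠP‖ + |γ|‖ΠG‖`. Squaring twice with Young's
inequality `(a + b)² ≤ (1 + α)a² + (1 + 1/α)b²` at `α = ρ/(1 - ρ)`, i.e. convexity of `t ↦ t²` at
weights `1 - ρ` and `ρ`, turns this into the fourth-power bound.
-/

open Finset Matrix

/-- Euclidean norm of a finite real vector. -/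
noncomputable def euclNorm {m : Type*} [Fintype m] (v : m → ℝ) : ℝ :=
  Real.sqrt (∑ i, v i ^ 2)

/-- Frobenius norm of a real matrix. -/
noncomputable def frobNorm {m k : Type*} [Fintype m] [Fintype k]
    (M : Matrix m k ℝ) : ℝ :=
  Real.sqrt (∑ i, ∑ j, M i j ^ 2)

lemma sq_one_sub_mul_add_le {ρ a c : ℝ} (hρ : 0 < ρ) (hρ1 : ρ ≤ 1) :
    ((1 - ρ) * a + c) ^ 2 ≤ (1 - ρ) * a ^ 2 + c ^ 2 / ρ := by
  rw [← sub_nonneg]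
  have key : (1 - ρ) * a ^ 2 + c ^ 2 / ρ - ((1 - ρ) * a + c) ^ 2
      = (1 - ρ) * (ρ * a - c) ^ 2 / ρ := by
    field_simp
    ring
  rw [key]
  have : 0 ≤ 1 - ρ := by linarith
  positivity

lemma pow_four_one_sub_mul_add_le {ρ a c : ℝ} (hρ : 0 < ρ) (hρ1 : ρ ≤ 1) :
    ((1 - ρ) * a + c) ^ 4 ≤ (1 - ρ) * a ^ 4 + c ^ 4 / ρ ^ 3 :=
  calc ((1 - ρ) * a + c) ^ 4 = (((1 - ρ) * a + c) ^ 2) ^ 2 := by ring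
    _ ≤ ((1 - ρ) * a ^ 2 + c ^ 2 / ρ) ^ 2 :=
      pow_le_pow_left₀ (sq_nonneg _) (sq_one_sub_mul_add_le hρ hρ1) 2
    _ ≤ (1 - ρ) * (a ^ 2) ^ 2 + (c ^ 2 / ρ) ^ 2 / ρ := sq_one_sub_mul_add_le hρ hρ1
    _ = (1 - ρ) * a ^ 4 + c ^ 4 / ρ ^ 3 := by ring

section Norms

variable {m k l : Type*} [Fintype m] [Fintype k] [Fintype l]

lemma euclNorm_eq_norm (v : m → ℝ) : euclNorm v = ‖WithLp.toLp 2 v‖ := by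
  simp [euclNorm, EuclideanSpace.norm_eq]

lemma euclNorm_nonneg (v : m → ℝ) : 0 ≤ euclNorm v := Real.sqrt_nonneg _

lemma euclNorm_add_le (v w : m → ℝ) : euclNorm (v + w) ≤ euclNorm v + euclNorm w := by
  simpa only [euclNorm_eq_norm, WithLp.toLp_add] using norm_add_le _ _

lemma euclNorm_smul (c : ℝ) (v : m → ℝ) : euclNorm (c • v) = |c| * euclNorm v := by
  simp only [euclNorm_eq_norm, WithLp.toLp_smul, norm_smul, Real.norm_eq_abs]

lemma frobNorm_eq_euclNorm (M : Matrix m k ℝ) :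
    frobNorm M = euclNorm (fun p : m × k => M p.1 p.2) := by
  simp only [frobNorm, euclNorm, Fintype.sum_prod_type]

lemma frobNorm_nonneg (M : Matrix m k ℝ) : 0 ≤ frobNorm M := Real.sqrt_nonneg _

lemma frobNorm_add_le (M N : Matrix m k ℝ) : frobNorm (M + N) ≤ frobNorm M + frobNorm N := by
  simp only [frobNorm_eq_euclNorm]
  exact euclNorm_add_le (fun p : m × k => M p.1 p.2) _

lemma frobNorm_smul (c : ℝ) (M : Matrix m k ℝ) : frobNorm (c • M) = |c| * frobNorm M := by
  simp only [frobNorm_eq_euclNorm]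
  exact euclNorm_smul c (fun p : m × k => M p.1 p.2)

lemma frobNorm_sub_smul_le (M N : Matrix m k ℝ) (c : ℝ) :
    frobNorm (M - c • N) ≤ frobNorm M + |c| * frobNorm N := by
  rw [sub_eq_add_neg, ← neg_smul, ← abs_neg, ← frobNorm_smul]
  exact frobNorm_add_le M _

lemma sq_frobNorm_eq_sum_col (M : Matrix m k ℝ) :
    frobNorm M ^ 2 = ∑ j, euclNorm (fun i => M i j) ^ 2 := by
  simp only [frobNorm, euclNorm]
  rw [Real.sq_sqrt (by positivity), Finset.sum_comm]
  exact Finset.sum_congr rfl fun j _ => (Real.sq_sqrt (by positivity)).symm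

lemma frobNorm_mul_le_of_mulVec_le {A : Matrix l m ℝ} {B : Matrix l m ℝ} {c : ℝ} (hc : 0 ≤ c)
    (h : ∀ z, euclNorm (A *ᵥ z) ≤ c * euclNorm (B *ᵥ z)) (Q : Matrix m k ℝ) :
    frobNorm (A * Q) ≤ c * frobNorm (B * Q) := by
  have hcol : ∀ (C : Matrix l m ℝ) (j : k), (fun i => (C * Q) i j) = C *ᵥ fun i => Q i j :=
    fun C j => by ext i; simp [mul_apply, mulVec, dotProduct]
  refine (pow_le_pow_iff_left₀ (frobNorm_nonneg _)
    (mul_nonneg hc (frobNorm_nonneg _)) two_ne_zero).1 ?_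
  rw [mul_pow, sq_frobNorm_eq_sum_col, sq_frobNorm_eq_sum_col, Finset.mul_sum]
  refine Finset.sum_le_sum fun j _ => ?_
  rw [hcol, hcol, ← mul_pow]
  exact pow_le_pow_left₀ (euclNorm_nonneg _) (h _) 2

lemma sum_sq_mulVec_eq_dotProduct (A : Matrix l m ℝ) (x : m → ℝ) :
    ∑ i, (A *ᵥ x) i ^ 2 = x ⬝ᵥ ((Aᵀ * A) *ᵥ x) := by
  rw [← mulVec_mulVec, dotProduct_mulVec, vecMul_transpose]
  simp only [dotProduct, sq]

lemma euclNorm_mulVec_eq_of_transpose_mul_self {P : Matrix m m ℝ} {U : Matrix m k ℝ}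
    (h : Pᵀ * P = U * Uᵀ) (x : m → ℝ) : euclNorm (P *ᵥ x) = euclNorm (Uᵀ *ᵥ x) := by
  rw [euclNorm, euclNorm, sum_sq_mulVec_eq_dotProduct, sum_sq_mulVec_eq_dotProduct,
    transpose_transpose, h]

end Norms

noncomputable def centering (n : ℕ) : Matrix (Fin n) (Fin n) ℝ :=
  1 - (n : ℝ)⁻¹ • of fun _ _ => 1

lemma centering_transpose {n : ℕ} : (centering n)ᵀ = centering n := by
  rw [centering, transpose_sub, transpose_one, transpose_smul]
  rfl

lemma centering_mul_ones {n : ℕ} :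
    centering n * (of fun _ _ => 1 : Matrix (Fin n) (Fin n) ℝ) = 0 := by
  ext i j
  have hn : (n : ℝ) ≠ 0 := Nat.cast_ne_zero.2 i.pos.ne'
  simp [centering, mul_apply, one_apply, hn]

lemma centering_mul_self {n : ℕ} : centering n * centering n = centering n := by
  conv_lhs => arg 2; rw [centering]
  rw [Matrix.mul_sub, Matrix.mul_one, Matrix.mul_smul, centering_mul_ones, smul_zero, sub_zero]

section Consensus

variable {n r : ℕ} {W : Matrix (Fin n) (Fin n) ℝ} {U : Matrix (Fin n) (Fin r) ℝ}

lemma transpose_mul_ones_eq_zero (hU : centering n = U * Uᵀ) :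
    Uᵀ * (of fun _ _ => 1 : Matrix (Fin n) (Fin n) ℝ) = 0 := by
  have h := centering_mul_ones (n := n)
  rw [hU, ← conjTranspose_eq_transpose_of_trivial, self_mul_conjTranspose_mul_eq_zero] at h
  rwa [← conjTranspose_eq_transpose_of_trivial]

lemma transpose_mul_eq_of_row_sum (hWrow : ∀ i, ∑ j, W i j = 1) (hU : centering n = U * Uᵀ) :
    Uᵀ * W = Uᵀ * W * U * Uᵀ := by
  have hWJ : W * (of fun _ _ => 1 : Matrix (Fin n) (Fin n) ℝ) = of fun _ _ => 1 := by
    ext i j; simp [mul_apply, hWrow]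
  calc Uᵀ * W = Uᵀ * W * centering n := by
        rw [centering, Matrix.mul_sub, Matrix.mul_one, Matrix.mul_smul, Matrix.mul_assoc, hWJ,
          transpose_mul_ones_eq_zero hU, smul_zero, sub_zero]
    _ = Uᵀ * W * U * Uᵀ := by rw [hU, Matrix.mul_assoc _ U]

lemma euclNorm_centering_mulVec (hU : centering n = U * Uᵀ) (x : Fin n → ℝ) :
    euclNorm (centering n *ᵥ x) = euclNorm (Uᵀ *ᵥ x) :=
  euclNorm_mulVec_eq_of_transpose_mul_self
    (by rw [centering_transpose, centering_mul_self, hU]) x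

lemma euclNorm_centering_mul_mulVec_le {ρ : ℝ} (hWrow : ∀ i, ∑ j, W i j = 1)
    (hU : centering n = U * Uᵀ)
    (hspec : ∀ v, euclNorm ((Uᵀ * W * U) *ᵥ v) ≤ (1 - ρ) * euclNorm v) (z : Fin n → ℝ) :
    euclNorm ((centering n * W) *ᵥ z) ≤ (1 - ρ) * euclNorm (centering n *ᵥ z) :=
  calc euclNorm ((centering n * W) *ᵥ z) = euclNorm ((Uᵀ * W) *ᵥ z) := by
        rw [← mulVec_mulVec, euclNorm_centering_mulVec hU, mulVec_mulVec]
    _ = euclNorm ((Uᵀ * W * U) *ᵥ (Uᵀ *ᵥ z)) := by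
        rw [mulVec_mulVec, ← transpose_mul_eq_of_row_sum hWrow hU]
    _ ≤ (1 - ρ) * euclNorm (centering n *ᵥ z) := by
        rw [euclNorm_centering_mulVec hU]; exact hspec _

end Consensus

theorem consensus_one_step_pow4_general {n d : ℕ}
    (W : Matrix (Fin n) (Fin n) ℝ) (U : Matrix (Fin n) (Fin (n - 1)) ℝ)
    (ρ : ℝ) (hρ : ρ ∈ Set.Ioc (0 : ℝ) 1)
    (hWrow : ∀ i, ∑ j, W i j = 1)
    (hU : (1 : Matrix (Fin n) (Fin n) ℝ)
        - (n : ℝ)⁻¹ • (Matrix.of fun _ _ => (1 : ℝ)) = U * Uᵀ)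
    (hspec : ∀ v : Fin (n - 1) → ℝ,
      euclNorm ((Uᵀ * W * U) *ᵥ v) ≤ (1 - ρ) * euclNorm v)
    (P G : Matrix (Fin n) (Fin d) ℝ) (γ : ℝ) :
    frobNorm (((1 : Matrix (Fin n) (Fin n) ℝ)
        - (n : ℝ)⁻¹ • (Matrix.of fun _ _ => (1 : ℝ))) * (W * P - γ • G)) ^ 4
      ≤ (1 - ρ) * frobNorm (((1 : Matrix (Fin n) (Fin n) ℝ)
          - (n : ℝ)⁻¹ • (Matrix.of fun _ _ => (1 : ℝ))) * P) ^ 4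
        + (γ ^ 4 / ρ ^ 3) * frobNorm (((1 : Matrix (Fin n) (Fin n) ℝ)
          - (n : ℝ)⁻¹ • (Matrix.of fun _ _ => (1 : ℝ))) * G) ^ 4 := by
  change frobNorm (centering n * (W * P - γ • G)) ^ 4
    ≤ (1 - ρ) * frobNorm (centering n * P) ^ 4 + γ ^ 4 / ρ ^ 3 * frobNorm (centering n * G) ^ 4
  obtain ⟨hρ0, hρ1⟩ := hρ
  set a := frobNorm (centering n * P)
  set g := frobNorm (centering n * G)
  have hcontract : frobNorm (centering n * W * P) ≤ (1 - ρ) * a :=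
    frobNorm_mul_le_of_mulVec_le (sub_nonneg.2 hρ1)
      (euclNorm_centering_mul_mulVec_le hWrow hU hspec) P
  have hstep : frobNorm (centering n * (W * P - γ • G)) ≤ (1 - ρ) * a + |γ| * g := by
    rw [Matrix.mul_sub, Matrix.mul_smul, ← Matrix.mul_assoc]
    exact (frobNorm_sub_smul_le _ _ γ).trans (add_le_add hcontract le_rfl)
  calc frobNorm (centering n * (W * P - γ • G)) ^ 4 ≤ ((1 - ρ) * a + |γ| * g) ^ 4 :=
        pow_le_pow_left₀ (frobNorm_nonneg _) hstep 4
    _ ≤ (1 - ρ) * a ^ 4 + (|γ| * g) ^ 4 / ρ ^ 3 := pow_four_one_sub_mul_add_le hρ0 hρ1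
    _ = (1 - ρ) * a ^ 4 + γ ^ 4 / ρ ^ 3 * g ^ 4 := by
        rw [mul_pow, pow_abs, abs_of_nonneg (by positivity)]
        ring

/-- One-step fourth-order consensus error recursion for DSGD. -/
theorem consensus_one_step_pow4 {n d : ℕ} (hn : 0 < n)
    (W : Matrix (Fin n) (Fin n) ℝ) (U : Matrix (Fin n) (Fin (n - 1)) ℝ)
    (ρ : ℝ) (hρ : ρ ∈ Set.Ioc (0 : ℝ) 1)
    (hWsym : Wᵀ = W)
    (hWnn : ∀ i j, 0 ≤ W i j)
    (hWrow : ∀ i, ∑ j, W i j = 1) (hWcol : ∀ j, ∑ i, W i j = 1)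
    (hU : (1 : Matrix (Fin n) (Fin n) ℝ)
        - (n : ℝ)⁻¹ • (Matrix.of fun _ _ => (1 : ℝ)) = U * Uᵀ)
    (hspec : ∀ v : Fin (n - 1) → ℝ,
      euclNorm ((Uᵀ * W * U) *ᵥ v) ≤ (1 - ρ) * euclNorm v)
    (P G : Matrix (Fin n) (Fin d) ℝ) (γ : ℝ) (hγ : 0 < γ) :
    frobNorm (((1 : Matrix (Fin n) (Fin n) ℝ)
        - (n : ℝ)⁻¹ • (Matrix.of fun _ _ => (1 : ℝ))) * (W * P - γ • G)) ^ 4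
      ≤ (1 - ρ) * frobNorm (((1 : Matrix (Fin n) (Fin n) ℝ)
          - (n : ℝ)⁻¹ • (Matrix.of fun _ _ => (1 : ℝ))) * P) ^ 4
        + (γ ^ 4 / ρ ^ 3) * frobNorm (((1 : Matrix (Fin n) (Fin n) ℝ)
          - (n : ℝ)⁻¹ • (Matrix.of fun _ _ => (1 : ℝ))) * G) ^ 4 :=
  consensus_one_step_pow4_general W U ρ hρ hWrow hU hspec P G γ
end

section
/- Let g_1, …, g_n : R^d → R^d each be L-Lipschitz with average g = (1/n)∑_i g_i satisfying ‖g(x) − g_i(x)‖ ≤ ς for all x, i. Then for any x_1, …, x_n with mean x̄ and S = ∑_i ‖x_i − x̄‖², one has ∑_{i=1}^n ‖g_i(x_i) − (1/n)∑_j g_j(x_j)‖⁴ ≤ 8 n ς⁴ + (8L⁴/n) ∑_{i=1}^n ∑_{j=1}^n ‖x_i − x_j‖⁴. -/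
open Finset

lemma add_pow4_le (p q : ℝ) (hp : 0 ≤ p) (hq : 0 ≤ q) :
    (p + q) ^ 4 ≤ 8 * (p ^ 4 + q ^ 4) := by
  nlinarith [sq_nonneg (p - q), sq_nonneg (p + q), sq_nonneg (p ^ 2 - q ^ 2), sq_nonneg (p * q), mul_nonneg hp hq]

theorem gradient_variation_pow4_bound {d n : ℕ} (hn : 0 < n)
    (g : Fin n → EuclideanSpace ℝ (Fin d) → EuclideanSpace ℝ (Fin d))
    (L ς : ℝ)
    (hLip : ∀ i x y, ‖g i x - g i y‖ ≤ L * ‖x - y‖)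
    (hhet : ∀ i x, ‖(n : ℝ)⁻¹ • (∑ j, g j x) - g i x‖ ≤ ς)
    (x : Fin n → EuclideanSpace ℝ (Fin d)) :
    ∑ i, ‖g i (x i) - (n : ℝ)⁻¹ • (∑ j, g j (x j))‖ ^ 4
      ≤ 8 * n * ς ^ 4 + (8 * L ^ 4 / n) * ∑ i, ∑ j, ‖x i - x j‖ ^ 4 := by
  have hn' : (0:ℝ) < n := by exact_mod_cast hn
  set c : ℝ := (n:ℝ)⁻¹ with hc
  have hcpos : 0 < c := by positivity
  have hς : 0 ≤ ς := le_trans (norm_nonneg _) (hhet ⟨0, hn⟩ 0)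
  have key : ∀ i, ‖g i (x i) - c • (∑ j, g j (x j))‖ ^ 4
      ≤ 8 * ς ^ 4 + 8 * c * ∑ j, L ^ 4 * ‖x i - x j‖ ^ 4 := by
    intro i
    set t : Fin n → ℝ := fun j => ‖g j (x i) - g j (x j)‖ with ht
    have htnn : ∀ j ∈ Finset.univ, 0 ≤ t j := fun j _ => norm_nonneg _
    set T : ℝ := c * ∑ j, t j with hT
    have hTnn : 0 ≤ T := mul_nonneg hcpos.le (Finset.sum_nonneg htnn)
    have hdecomp : g i (x i) - c • (∑ j, g j (x j))
        = (g i (x i) - c • ∑ j, g j (x i)) + c • ∑ j, (g j (x i) - g j (x j)) := by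
      rw [Finset.sum_sub_distrib, smul_sub]; abel
    have h1 : ‖g i (x i) - c • ∑ j, g j (x i)‖ ≤ ς := by
      rw [norm_sub_rev]; exact hhet i (x i)
    have h2 : ‖c • ∑ j, (g j (x i) - g j (x j))‖ ≤ T := by
      rw [norm_smul, Real.norm_eq_abs, abs_of_pos hcpos]
      exact mul_le_mul_of_nonneg_left (norm_sum_le _ _) hcpos.le
    have hle : ‖g i (x i) - c • (∑ j, g j (x j))‖ ≤ ς + T := by
      rw [hdecomp]
      exact (norm_add_le _ _).trans (add_le_add h1 h2)
    have hpow : ‖g i (x i) - c • (∑ j, g j (x j))‖ ^ 4 ≤ (ς + T) ^ 4 :=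
      pow_le_pow_left₀ (norm_nonneg _) hle 4
    have h8 : (ς + T) ^ 4 ≤ 8 * (ς ^ 4 + T ^ 4) := add_pow4_le _ _ hς hTnn
    -- power mean: T ^ 4 ≤ c * ∑ j, t j ^ 4
    have hpm : (∑ j, t j) ^ 4 / (n:ℝ) ^ 3 ≤ ∑ j, t j ^ 4 := by
      have := pow_sum_div_card_le_sum_pow (s := Finset.univ) htnn 3
      simpa using this
    have hTpow : T ^ 4 ≤ c * ∑ j, t j ^ 4 := by
      have : T ^ 4 = c * ((∑ j, t j) ^ 4 / (n:ℝ) ^ 3) := by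
        rw [hT, mul_pow, hc, inv_pow]
        rw [show ((n:ℝ)^4)⁻¹ = (n:ℝ)⁻¹ * ((n:ℝ)^3)⁻¹ by rw [← mul_inv]; ring_nf]
        ring
      rw [this]
      exact mul_le_mul_of_nonneg_left hpm hcpos.le
    have hLbd : ∀ j ∈ Finset.univ, t j ^ 4 ≤ L ^ 4 * ‖x i - x j‖ ^ 4 := by
      intro j _
      have := hLip j (x i) (x j)
      calc t j ^ 4 ≤ (L * ‖x i - x j‖) ^ 4 := pow_le_pow_left₀ (norm_nonneg _) this 4
        _ = L ^ 4 * ‖x i - x j‖ ^ 4 := by ring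
    have hsum : ∑ j, t j ^ 4 ≤ ∑ j, L ^ 4 * ‖x i - x j‖ ^ 4 := Finset.sum_le_sum hLbd
    calc ‖g i (x i) - c • (∑ j, g j (x j))‖ ^ 4 ≤ 8 * (ς ^ 4 + T ^ 4) := hpow.trans h8
      _ ≤ 8 * (ς ^ 4 + c * ∑ j, L ^ 4 * ‖x i - x j‖ ^ 4) := by
          have := mul_le_mul_of_nonneg_left hsum hcpos.le
          nlinarith
      _ = 8 * ς ^ 4 + 8 * c * ∑ j, L ^ 4 * ‖x i - x j‖ ^ 4 := by ring
  calc ∑ i, ‖g i (x i) - c • (∑ j, g j (x j))‖ ^ 4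
      ≤ ∑ i : Fin n, (8 * ς ^ 4 + 8 * c * ∑ j, L ^ 4 * ‖x i - x j‖ ^ 4) :=
        Finset.sum_le_sum fun i _ => key i
    _ = 8 * n * ς ^ 4 + (8 * L ^ 4 / n) * ∑ i, ∑ j, ‖x i - x j‖ ^ 4 := by
        rw [Finset.sum_add_distrib, Finset.sum_const, Finset.card_univ, Fintype.card_fin,
          nsmul_eq_mul]
        rw [Finset.mul_sum]
        congr 1
        · ring
        · apply Finset.sum_congr rfl
          intro i _
          rw [Finset.mul_sum, Finset.mul_sum]
          apply Finset.sum_congr rfl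
          intro j _
          rw [hc]
          field_simp
end
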